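/- arXiv:1804.09818 — 4 statements merged into one kernel-verified Lean document; each statement's English description precedes it below -/
import Mathlib

section
/- Let P be a plane in ℝ³ and let a, b, c be three affinely independent points in ℝ³. Let θ be the (dihedral) angle between P and the plane spanned by a, b, c, let h(x) denote the distance from a point x to P, and let r be the inradius of the triangle with vertices a, b, c. Then θ ≤ (h(a) + h(b) + h(c)) / r. -/
open Real

local notation "⟪" x ", " y "⟫" => @inner ℝ _ _ x y

/-- Key algebraic inequality: for `u` in the span of `x, y`,
`sqrt(Gram(x,y)) * ‖u‖ ≤ |⟪x,u⟫|‖y‖ + |⟪y,u⟫|‖x‖`. -/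
lemma key_ineq {E : Type*} [NormedAddCommGroup E] [InnerProductSpace ℝ E]
    (x y u : E) (α β : ℝ) (hu : u = α • x + β • y) :
    Real.sqrt (‖x‖^2 * ‖y‖^2 - ⟪x, y⟫^2) * ‖u‖ ≤ |⟪x, u⟫| * ‖y‖ + |⟪y, u⟫| * ‖x‖ := by
  have hcs : |(⟪x, y⟫ : ℝ)| ≤ ‖x‖ * ‖y‖ := abs_real_inner_le_norm x y
  have hP : (⟪x, u⟫ : ℝ) = α * ‖x‖^2 + β * ⟪x, y⟫ := by
    rw [hu, inner_add_right, real_inner_smul_right, real_inner_smul_right,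
      real_inner_self_eq_norm_sq]
  have hQ : (⟪y, u⟫ : ℝ) = α * ⟪x, y⟫ + β * ‖y‖^2 := by
    rw [hu, inner_add_right, real_inner_smul_right, real_inner_smul_right,
      real_inner_self_eq_norm_sq, real_inner_comm y x]
  have hU : ‖u‖^2 = α^2 * ‖x‖^2 + 2*α*β*⟪x, y⟫ + β^2 * ‖y‖^2 := by
    rw [← real_inner_self_eq_norm_sq, hu]
    simp only [inner_add_left, inner_add_right, real_inner_smul_left, real_inner_smul_right,
      real_inner_self_eq_norm_sq, real_inner_comm y x, norm_smul, mul_pow, sq_abs,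
      Real.norm_eq_abs]
    ring
  set G : ℝ := ‖x‖^2 * ‖y‖^2 - ⟪x, y⟫^2 with hG
  have hG0 : 0 ≤ G := by nlinarith [abs_nonneg (⟪x, y⟫ : ℝ), sq_abs (⟪x, y⟫ : ℝ)]
  have hid : G * ‖u‖^2 = ⟪x, u⟫^2 * ‖y‖^2 - 2 * ⟪x, u⟫ * ⟪y, u⟫ * ⟪x, y⟫
      + ⟪y, u⟫^2 * ‖x‖^2 := by
    rw [hP, hQ, hU, hG]; ring
  have hR0 : 0 ≤ |⟪x, u⟫| * ‖y‖ + |⟪y, u⟫| * ‖x‖ := by positivity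
  have hle : G * ‖u‖^2 ≤ (|⟪x, u⟫| * ‖y‖ + |⟪y, u⟫| * ‖x‖)^2 := by
    have h1 : -(⟪x, u⟫ * ⟪y, u⟫ * ⟪x, y⟫) ≤ |⟪x, u⟫| * |⟪y, u⟫| * (‖x‖ * ‖y‖) := by
      calc -(⟪x, u⟫ * ⟪y, u⟫ * ⟪x, y⟫) ≤ |⟪x, u⟫ * ⟪y, u⟫ * ⟪x, y⟫| := neg_le_abs _
        _ = |⟪x, u⟫| * |⟪y, u⟫| * |⟪x, y⟫| := by rw [abs_mul, abs_mul]
        _ ≤ |⟪x, u⟫| * |⟪y, u⟫| * (‖x‖ * ‖y‖) := by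
            apply mul_le_mul_of_nonneg_left hcs (by positivity)
    rw [hid]
    nlinarith [sq_abs (⟪x, u⟫ : ℝ), sq_abs (⟪y, u⟫ : ℝ)]
  calc Real.sqrt G * ‖u‖ = Real.sqrt (G * ‖u‖^2) := by
        rw [Real.sqrt_mul hG0, Real.sqrt_sq (norm_nonneg u)]
    _ ≤ Real.sqrt ((|⟪x, u⟫| * ‖y‖ + |⟪y, u⟫| * ‖x‖)^2) := Real.sqrt_le_sqrt hle
    _ = _ := Real.sqrt_sq hR0


lemma scalar_case (T g s S A B C X Y : ℝ)
    (hg : 0 ≤ g) (hs : 0 ≤ s) (hS : 0 ≤ S)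
    (hA : A ≤ s) (hB : B ≤ s) (hC : C ≤ s)
    (hSX : |X|  ≤ S) (hSY : |Y|  ≤ S) (hSXY : |X - Y| ≤ S)
    (k1 : 2*T*g ≤ |X|  *C + |Y|  *A)
    (k2 : 2*T*g ≤ |X|  *B + |Y - X|  *A)
    (k3 : 2*T*g ≤ |Y|  *B + |X - Y|  *C) :
    2*T*g ≤ s*S := by
  rcases le_total 0 X with hX | hX <;> rcases le_total 0 Y with hY | hY <;>
    rcases le_total X Y with hXY | hXY
  · rw [abs_of_nonneg hX, abs_of_nonneg (by linarith : (0:ℝ) ≤ Y - X)] at k2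
    rw [abs_of_nonneg hY] at hSY
    nlinarith [mul_nonneg hX (sub_nonneg.2 hB), mul_nonneg (by linarith : (0:ℝ) ≤ Y - X) (sub_nonneg.2 hA), mul_nonneg hs (sub_nonneg.2 hSY)]
  · rw [abs_of_nonneg hY, abs_of_nonneg (by linarith : (0:ℝ) ≤ X - Y)] at k3
    rw [abs_of_nonneg hX] at hSX
    nlinarith [mul_nonneg hY (sub_nonneg.2 hB), mul_nonneg (by linarith : (0:ℝ) ≤ X - Y) (sub_nonneg.2 hC), mul_nonneg hs (sub_nonneg.2 hSX)]
  · have h0 : X = 0 := le_antisymm (by linarith) hX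
    have h1 : Y = 0 := le_antisymm hY (by linarith)
    rw [h0, h1] at k1; simp at k1
    nlinarith [mul_nonneg hs hS]
  · rw [abs_of_nonneg hX, abs_of_nonpos hY] at k1
    rw [abs_of_nonneg (by linarith : (0:ℝ) ≤ X - Y)] at hSXY
    nlinarith [mul_nonneg hX (sub_nonneg.2 hC), mul_nonneg (by linarith : (0:ℝ) ≤ -Y) (sub_nonneg.2 hA), mul_nonneg hs (sub_nonneg.2 hSXY)]
  · rw [abs_of_nonpos hX, abs_of_nonneg hY] at k1
    rw [abs_of_nonpos (by linarith : X - Y ≤ 0)] at hSXY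
    nlinarith [mul_nonneg (by linarith : (0:ℝ) ≤ -X) (sub_nonneg.2 hC), mul_nonneg hY (sub_nonneg.2 hA), mul_nonneg hs (sub_nonneg.2 hSXY)]
  · have h0 : X = 0 := le_antisymm hX (by linarith)
    have h1 : Y = 0 := le_antisymm (by linarith) hY
    rw [h0, h1] at k1; simp at k1
    nlinarith [mul_nonneg hs hS]
  · rw [abs_of_nonpos hY, abs_of_nonpos (by linarith : X - Y ≤ 0)] at k3
    rw [abs_of_nonpos hX] at hSX
    nlinarith [mul_nonneg (by linarith : (0:ℝ) ≤ -Y) (sub_nonneg.2 hB), mul_nonneg (by linarith : (0:ℝ) ≤ Y - X) (sub_nonneg.2 hC), mul_nonneg hs (by linarith : 0 ≤ S - (-X))]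
  · rw [abs_of_nonpos hX, abs_of_nonpos (by linarith : Y - X ≤ 0)] at k2
    rw [abs_of_nonpos hY] at hSY
    nlinarith [mul_nonneg (by linarith : (0:ℝ) ≤ -X) (sub_nonneg.2 hB), mul_nonneg (by linarith : (0:ℝ) ≤ X - Y) (sub_nonneg.2 hA), mul_nonneg hs (by linarith : 0 ≤ S - (-Y))]


/-- Heron's formula for the area of a triangle with side lengths `a`, `b`, `c`. -/
noncomputable def heronArea (a b c : ℝ) : ℝ :=
  Real.sqrt (((a + b + c) / 2) * ((a + b + c) / 2 - a) *
    ((a + b + c) / 2 - b) * ((a + b + c) / 2 - c))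

/-- The inradius of the triangle with vertices `a`, `b`, `c`: area divided by
the semiperimeter. -/
noncomputable def triInradius {E : Type*} [NormedAddCommGroup E] (a b c : E) : ℝ :=
  heronArea (dist a b) (dist b c) (dist c a) / ((dist a b + dist b c + dist c a) / 2)

set_option maxHeartbeats 1000000 in
/-- The plane `P` is `{x | ⟪x, v⟫ = d}` with unit normal `v`, so the distance from `x`
to `P` is `|⟪x, v⟫ - d|`.  `w` is a unit normal to the plane spanned by the affinely
independent points `a, b, c`, so the dihedral angle between the two planes is
`arccos |⟪v, w⟫|`.  Then `θ ≤ (h a + h b + h c) / r`. -/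
theorem stmt_1 (v : EuclideanSpace ℝ (Fin 3)) (hv : ‖v‖ = 1) (d : ℝ)
    (a b c : EuclideanSpace ℝ (Fin 3)) (hind : ¬ Collinear ℝ ({a, b, c} : Set _))
    (w : EuclideanSpace ℝ (Fin 3)) (hw : ‖w‖ = 1)
    (hw1 : (inner ℝ w (b - a) : ℝ) = 0) (hw2 : (inner ℝ w (c - a) : ℝ) = 0) :
    Real.arccos |(inner ℝ v w : ℝ)| ≤
      (|(inner ℝ a v : ℝ) - d| + |(inner ℝ b v : ℝ) - d| + |(inner ℝ c v : ℝ) - d|) /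
        triInradius a b c := by
  set x : EuclideanSpace ℝ (Fin 3) := b - a with hxdef
  set y : EuclideanSpace ℝ (Fin 3) := c - a with hydef
  set t : ℝ := ⟪v, w⟫ with htdef
  set u : EuclideanSpace ℝ (Fin 3) := v - t • w with hudef
  -- independence of x, y
  have hxy : ∀ α β : ℝ, α • x + β • y = 0 → α = 0 ∧ β = 0 := by
    intro α β h
    by_contra hcon
    apply hind
    rcases eq_or_ne α 0 with hα | hα
    · have hβ : β ≠ 0 := fun hβ => hcon ⟨hα, hβ⟩
      have hy0 : y = 0 := by
        have h' : β • y = 0 := by rwa [hα, zero_smul, zero_add] at h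
        exact (smul_eq_zero.mp h').resolve_left hβ
      have hca : c = a := sub_eq_zero.mp hy0
      rw [hca]
      have hset : ({a, b, a} : Set (EuclideanSpace ℝ (Fin 3))) = {a, b} := by
        ext p; simp; tauto
      rw [hset]; exact collinear_pair ℝ a b
    · rw [collinear_iff_of_mem (Set.mem_insert a {b, c})]
      refine ⟨y, fun p hp => ?_⟩
      have h2 : α • x = (-β) • y := by rw [neg_smul]; exact eq_neg_of_add_eq_zero_left h
      have hb : x = (α⁻¹ * (-β)) • y := by
        rw [mul_smul, ← h2, smul_smul, inv_mul_cancel₀ hα, one_smul]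
      simp only [Set.mem_insert_iff, Set.mem_singleton_iff] at hp
      rcases hp with rfl | rfl | rfl
      · exact ⟨0, by simp⟩
      · refine ⟨α⁻¹ * (-β), ?_⟩
        have : p - a = (α⁻¹ * (-β)) • y := hb
        rw [vadd_eq_add, ← this, sub_add_cancel]
      · refine ⟨1, ?_⟩
        rw [vadd_eq_add, one_smul, hydef, sub_add_cancel]
  -- u is in the span of x and y
  have hw0 : w ≠ 0 := fun h0 => by rw [h0, norm_zero] at hw; norm_num at hw
  obtain ⟨α, β, huxy⟩ : ∃ α β : ℝ, u = α • x + β • y := by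
    have hli : LinearIndependent ℝ ![x, y, w] := by
      rw [Fintype.linearIndependent_iff]
      intro g hg
      have hg' : g 0 • x + g 1 • y + g 2 • w = 0 := by
        simpa [Fin.sum_univ_three] using hg
      have h2 : g 2 = 0 := by
        have h3 := congrArg (fun z => (⟪w, z⟫ : ℝ)) hg'
        simp only [inner_add_right, real_inner_smul_right, hw1, hw2, inner_zero_right,
          real_inner_self_eq_norm_sq, hw, mul_zero, zero_add, one_pow, mul_one] at h3
        exact h3
      have h01 : g 0 • x + g 1 • y = 0 := by
        rwa [h2, zero_smul, add_zero] at hg'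
      obtain ⟨h0, h1⟩ := hxy _ _ h01
      intro i; fin_cases i <;> assumption
    have hspan : Submodule.span ℝ (Set.range ![x, y, w]) = ⊤ :=
      hli.span_eq_top_of_card_eq_finrank (by simp)
    have hu_mem : u ∈ Submodule.span ℝ (Set.range ![x, y, w]) := by
      rw [hspan]; trivial
    rw [Submodule.mem_span_range_iff_exists_fun] at hu_mem
    obtain ⟨g, hg⟩ := hu_mem
    have hg' : g 0 • x + g 1 • y + g 2 • w = u := by
      simpa [Fin.sum_univ_three] using hg
    have hwu : (⟪w, u⟫ : ℝ) = 0 := by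
      have hcomm : (⟪w, v⟫ : ℝ) = t := by rw [htdef]; exact real_inner_comm v w
      rw [hudef, inner_sub_right, real_inner_smul_right, real_inner_self_eq_norm_sq, hw, hcomm]
      ring
    have h2 : g 2 = 0 := by
      have h3 := congrArg (fun z => (⟪w, z⟫ : ℝ)) hg'
      simp only [inner_add_right, real_inner_smul_right, hw1, hw2,
        real_inner_self_eq_norm_sq, hw, mul_zero, zero_add, one_pow, mul_one] at h3
      rw [hwu] at h3; exact h3
    exact ⟨g 0, g 1, by rw [← hg', h2, zero_smul, add_zero]⟩
  -- geometry setup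
  set A : ℝ := dist a b with hAdef
  set B : ℝ := dist b c with hBdef
  set C : ℝ := dist c a with hCdef
  have hxA : ‖x‖ = A := by rw [hxdef, hAdef, dist_eq_norm, ← norm_neg (a - b)]; congr 1; abel
  have hyC : ‖y‖ = C := by rw [hydef, hCdef, dist_eq_norm]
  have hxyB : ‖x - y‖ = B := by rw [hxdef, hydef, hBdef, dist_eq_norm]; congr 1; abel
  set p : ℝ := ⟪x, y⟫ with hpdef
  have hpval : p = (A^2 + C^2 - B^2)/2 := by
    have h := norm_sub_sq_real x y
    rw [hxyB, hxA, hyC] at h; rw [hpdef]; linarith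
  set s : ℝ := (A + B + C)/2 with hsdef
  set prod : ℝ := ((A + B + C) / 2) * ((A + B + C) / 2 - A) *
    ((A + B + C) / 2 - B) * ((A + B + C) / 2 - C) with hproddef
  set T : ℝ := heronArea A B C with hTdef
  have hTsqrt : T = Real.sqrt prod := rfl
  -- nondegeneracy
  have hy0 : y ≠ 0 := by
    intro h0
    exact one_ne_zero (hxy 0 1 (by rw [h0, zero_smul, one_smul, zero_add])).2
  have habs : |p| < ‖x‖ * ‖y‖ := by
    rw [abs_lt]
    constructor
    · have h1 : (⟪-x, y⟫ : ℝ) < ‖-x‖ * ‖y‖ := by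
        rw [inner_lt_norm_mul_iff_real]
        intro heq
        have hrel : ‖y‖ • (-x) + (-‖-x‖) • y = 0 := by
          rw [neg_smul, heq]; abel
        have hrel' : (-‖y‖) • x + (-‖-x‖) • y = 0 := by
          rwa [smul_neg, ← neg_smul] at hrel
        have := (hxy _ _ hrel').1
        exact hy0 (norm_eq_zero.mp (by linarith [norm_nonneg y] : ‖y‖ = 0) )
      rw [inner_neg_left, norm_neg] at h1
      rw [hpdef]; linarith
    · rw [inner_lt_norm_mul_iff_real]
      intro heq
      have hrel : ‖y‖ • x + (-‖x‖) • y = 0 := by rw [neg_smul, heq]; abel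
      have := (hxy _ _ hrel).1
      exact hy0 (norm_eq_zero.mp this)
  have hGpos : 0 < A^2 * C^2 - p^2 := by
    rw [hxA, hyC] at habs
    nlinarith [abs_nonneg p, sq_abs p, dist_nonneg (x := a) (y := b), dist_nonneg (x := c) (y := a)]
  have hGprod : A^2 * C^2 - p^2 = 4 * prod := by rw [hpval, hproddef]; ring
  have hprodpos : 0 < prod := by linarith
  have hTpos : 0 < T := by rw [hTsqrt]; exact Real.sqrt_pos.mpr hprodpos
  have hT2 : T^2 = prod := by rw [hTsqrt]; exact Real.sq_sqrt hprodpos.le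
  have hsqrt4 : Real.sqrt (4 * prod) = 2 * T := by
    rw [show (4:ℝ) * prod = (2*T)^2 by rw [← hT2]; ring]
    exact Real.sqrt_sq (by linarith)
  -- the three key bounds
  set X : ℝ := ⟪x, u⟫ with hXdef
  set Y : ℝ := ⟪y, u⟫ with hYdef
  have k1 : 2 * T * ‖u‖ ≤ |X| * C + |Y| * A := by
    have h := key_ineq x y u α β huxy
    rwa [hxA, hyC, ← hpdef, hGprod, hsqrt4, ← hXdef, ← hYdef] at h
  have k2 : 2 * T * ‖u‖ ≤ |X| * B + |Y - X| * A := by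
    have huxy2 : u = (-(α+β)) • (-x) + β • (y - x) := by
      rw [huxy]; module
    have h := key_ineq (-x) (y - x) u (-(α+β)) β huxy2
    have e1 : ‖(-x : EuclideanSpace ℝ (Fin 3))‖ = A := by rw [norm_neg, hxA]
    have e2 : ‖y - x‖ = B := by rw [← norm_neg (y - x), neg_sub, hxyB]
    have e3 : (⟪-x, y - x⟫ : ℝ) = A^2 - p := by
      rw [inner_neg_left, inner_sub_right, real_inner_self_eq_norm_sq, hxA, ← hpdef]; ring
    have e4 : (⟪-x, u⟫ : ℝ) = -X := by rw [inner_neg_left, ← hXdef]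
    have e5 : (⟪y - x, u⟫ : ℝ) = Y - X := by rw [inner_sub_left, ← hXdef, ← hYdef]
    rw [e1, e2, e3, e4, e5, abs_neg] at h
    have e6 : A^2 * B^2 - (A^2 - p)^2 = 4 * prod := by rw [hpval]; ring
    rwa [e6, hsqrt4] at h
  have k3 : 2 * T * ‖u‖ ≤ |Y| * B + |X - Y| * C := by
    have huxy3 : u = (-(α+β)) • (-y) + α • (x - y) := by
      rw [huxy]; module
    have h := key_ineq (-y) (x - y) u (-(α+β)) α huxy3
    have e1 : ‖(-y : EuclideanSpace ℝ (Fin 3))‖ = C := by rw [norm_neg, hyC]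
    have e2 : ‖x - y‖ = B := hxyB
    have e3 : (⟪-y, x - y⟫ : ℝ) = C^2 - p := by
      rw [inner_neg_left, inner_sub_right, real_inner_self_eq_norm_sq, hyC, real_inner_comm x y, ← hpdef]; ring
    have e4 : (⟪-y, u⟫ : ℝ) = -Y := by rw [inner_neg_left, ← hYdef]
    have e5 : (⟪x - y, u⟫ : ℝ) = X - Y := by rw [inner_sub_left, ← hXdef, ← hYdef]
    rw [e1, e2, e3, e4, e5, abs_neg] at h
    have e6 : C^2 * B^2 - (C^2 - p)^2 = 4 * prod := by rw [hpval]; ring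
    rwa [e6, hsqrt4] at h
  -- relate X, Y to the heights
  set fa : ℝ := (⟪a, v⟫ : ℝ) - d with hfa
  set fb : ℝ := (⟪b, v⟫ : ℝ) - d with hfb
  set fc : ℝ := (⟪c, v⟫ : ℝ) - d with hfc
  have hwx : (⟪x, w⟫ : ℝ) = 0 := by rw [← hw1]; exact real_inner_comm w x
  have hwy : (⟪y, w⟫ : ℝ) = 0 := by rw [← hw2]; exact real_inner_comm w y
  have hXval : X = fb - fa := by
    rw [hXdef, hudef, inner_sub_right, real_inner_smul_right, hwx, mul_zero, sub_zero,
      hxdef, inner_sub_left, hfb, hfa]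
    ring
  have hYval : Y = fc - fa := by
    rw [hYdef, hudef, inner_sub_right, real_inner_smul_right, hwy, mul_zero, sub_zero,
      hydef, inner_sub_left, hfc, hfa]
    ring
  set S : ℝ := |fa| + |fb| + |fc| with hSdef
  have hS0 : 0 ≤ S := by positivity
  have hSX : |X| ≤ S := by
    rw [hXval, hSdef]
    calc |fb - fa| ≤ |fb| + |fa| := abs_sub fb fa
      _ ≤ |fa| + |fb| + |fc| := by linarith [abs_nonneg fc]
  have hSY : |Y| ≤ S := by
    rw [hYval, hSdef]
    calc |fc - fa| ≤ |fc| + |fa| := abs_sub fc fa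
      _ ≤ |fa| + |fb| + |fc| := by linarith [abs_nonneg fb]
  have hSXY : |X - Y| ≤ S := by
    rw [hXval, hYval, hSdef, show fb - fa - (fc - fa) = fb - fc by ring]
    calc |fb - fc| ≤ |fb| + |fc| := abs_sub fb fc
      _ ≤ |fa| + |fb| + |fc| := by linarith [abs_nonneg fa]
  -- sides at most the semiperimeter
  have htriA : A ≤ B + C := by
    rw [hAdef, hBdef, hCdef]
    calc dist a b ≤ dist a c + dist c b := dist_triangle a c b
      _ = dist b c + dist c a := by rw [dist_comm a c, dist_comm c b]; ring
  have htriB : B ≤ A + C := by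
    rw [hAdef, hBdef, hCdef]
    calc dist b c ≤ dist b a + dist a c := dist_triangle b a c
      _ = dist a b + dist c a := by rw [dist_comm b a, dist_comm a c]
  have htriC : C ≤ A + B := by
    rw [hAdef, hBdef, hCdef]
    calc dist c a ≤ dist c b + dist b a := dist_triangle c b a
      _ = dist a b + dist b c := by rw [dist_comm c b, dist_comm b a]; ring
  have hAs : A ≤ s := by rw [hsdef]; linarith
  have hBs : B ≤ s := by rw [hsdef]; linarith
  have hCs : C ≤ s := by rw [hsdef]; linarith
  have hA0 : 0 ≤ A := dist_nonneg
  have hB0 : 0 ≤ B := dist_nonneg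
  have hC0 : 0 ≤ C := dist_nonneg
  have hs0 : 0 ≤ s := by rw [hsdef]; linarith
  have hspos : 0 < s := by
    rcases hs0.lt_or_eq with h | h
    · exact h
    · exfalso
      rw [hproddef, ← hsdef, ← h] at hprodpos
      simp at hprodpos
  -- main bound
  have hmain : 2 * T * ‖u‖ ≤ s * S :=
    scalar_case T ‖u‖ s S A B C X Y (norm_nonneg u) hs0 hS0 hAs hBs hCs hSX hSY hSXY k1 k2 k3
  -- trigonometric endgame
  have htle : |t| ≤ 1 := by
    have := abs_real_inner_le_norm v w
    rwa [hv, hw, mul_one] at this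
  have hu2 : ‖u‖^2 = 1 - t^2 := by
    rw [← real_inner_self_eq_norm_sq, hudef]
    simp only [inner_sub_left, inner_sub_right, real_inner_smul_left, real_inner_smul_right,
      real_inner_self_eq_norm_sq, hv, hw, norm_smul, mul_pow, sq_abs, Real.norm_eq_abs]
    have hcomm : (⟪w, v⟫ : ℝ) = t := by rw [htdef]; exact real_inner_comm v w
    rw [hcomm, ← htdef]
    ring
  have husqrt : ‖u‖ = Real.sqrt (1 - t^2) := by
    rw [← hu2]
    exact (Real.sqrt_sq (norm_nonneg u)).symm
  have hu1 : ‖u‖ ≤ 1 := by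
    rw [husqrt]
    calc Real.sqrt (1 - t^2) ≤ Real.sqrt 1 := Real.sqrt_le_sqrt (by linarith only [sq_nonneg t])
      _ = 1 := Real.sqrt_one
  have harccos : Real.arccos |t| = Real.arcsin ‖u‖ := by
    rw [Real.arccos_eq_arcsin (abs_nonneg t), husqrt, sq_abs]
  have harcsin : Real.arcsin ‖u‖ ≤ π/2 * ‖u‖ := by
    have h1 : 2/π * Real.arcsin ‖u‖ ≤ Real.sin (Real.arcsin ‖u‖) :=
      Real.mul_le_sin (Real.arcsin_nonneg.mpr (norm_nonneg u)) (Real.arcsin_le_pi_div_two _)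
    rw [Real.sin_arcsin (by linarith [norm_nonneg u]) hu1] at h1
    have hπ : 0 < π := Real.pi_pos
    rw [div_mul_eq_mul_div, div_le_iff₀ hπ] at h1
    linarith only [h1]
  -- put everything together
  have hr : triInradius a b c = T / s := by
    rw [triInradius, hTdef, hAdef, hBdef, hCdef, hsdef]
  have hrpos : 0 < T / s := div_pos hTpos hspos
  rw [hr]
  have hgoal : Real.arccos |t| * (T / s) ≤ S := by
    have h2 : Real.arccos |t| ≤ 2 * ‖u‖ := by
      rw [harccos]
      refine harcsin.trans (mul_le_mul_of_nonneg_right ?_ (norm_nonneg u))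
      linarith only [Real.pi_le_four]
    have h3 : Real.arccos |t| * (T / s) ≤ 2 * ‖u‖ * (T / s) :=
      mul_le_mul_of_nonneg_right h2 hrpos.le
    have h4 : 2 * ‖u‖ * (T / s) ≤ S := by
      rw [mul_div_assoc', div_le_iff₀ hspos]
      calc 2 * ‖u‖ * T = 2 * T * ‖u‖ := by ring
        _ ≤ s * S := hmain
        _ = S * s := by ring
    linarith only [h3, h4]
  have hfinal : Real.arccos |t| ≤ S / (T / s) := by
    rw [le_div_iff₀ hrpos]
    exact hgoal
  calc Real.arccos |t| ≤ S / (T / s) := hfinal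
    _ = (|fa| + |fb| + |fc|) / (T / s) := by rw [hSdef]
end

section
/- For three affinely independent points a, b, c in ℝ³ lying in a plane P' that intersects a plane P in a line ℓ, letting h'(x) denote the distance within P' from x to ℓ and r the inradius of triangle abc, one has 2r ≤ h'(a) + h'(b) + h'(c). -/
open Module Metric EuclideanGeometry RealInnerProductSpace

local notation "E3" => EuclideanSpace ℝ (Fin 3)

lemma step_bound (D d1 d2 x y s S : ℝ) (hD : D ≤ d1 * y + d2 * x) (h1 : 0 ≤ d1) (h2 : 0 ≤ d2)
    (hys : y ≤ s) (hxs : x ≤ s) (hW : d1 + d2 ≤ S) (hs : 0 ≤ s) : D ≤ S * s := by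
  nlinarith [mul_nonneg h1 (by linarith : (0:ℝ) ≤ s - y), mul_nonneg h2 (by linarith : (0:ℝ) ≤ s - x),
    mul_nonneg (by linarith : (0:ℝ) ≤ S - (d1 + d2)) hs]

lemma width_bound (α β γ un um vn vm x y z : ℝ)
    (hun : un = β - α) (hvn : vn = γ - α)
    (hum : |um| ≤ x) (hvm : |vm| ≤ z) (hym : |vm - um| ≤ y)
    (htx : x ≤ y + z) (hty : y ≤ x + z) (htz : z ≤ x + y) :
    |un * vm - um * vn| ≤ (|α| + |β| + |γ|) * ((x + y + z) / 2) := by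
  have hx0 : 0 ≤ x := le_trans (abs_nonneg _) hum
  have hz0 : 0 ≤ z := le_trans (abs_nonneg _) hvm
  have hy0 : 0 ≤ y := le_trans (abs_nonneg _) hym
  set s : ℝ := (x + y + z) / 2 with hs_def
  have hs0 : 0 ≤ s := by positivity
  have hxs : x ≤ s := by simp only [hs_def]; linarith
  have hys : y ≤ s := by simp only [hs_def]; linarith
  have hzs : z ≤ s := by simp only [hs_def]; linarith
  have hAa : α ≤ |α| := le_abs_self _
  have hAa' : -α ≤ |α| := neg_le_abs _
  have hAb : β ≤ |β| := le_abs_self _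
  have hAb' : -β ≤ |β| := neg_le_abs _
  have hAc : γ ≤ |γ| := le_abs_self _
  have hAc' : -γ ≤ |γ| := neg_le_abs _
  set D : ℝ := |un * vm - um * vn| with hD_def
  -- three expansions
  have hE0 : D ≤ |β - α| * z + |γ - α| * x := by
    calc D ≤ |un * vm| + |um * vn| := abs_sub _ _
    _ = |un| * |vm| + |vn| * |um| := by rw [abs_mul, abs_mul]; ring
    _ ≤ |β - α| * z + |γ - α| * x := by
        rw [hun, hvn]
        exact add_le_add (mul_le_mul_of_nonneg_left hvm (abs_nonneg _))
          (mul_le_mul_of_nonneg_left hum (abs_nonneg _))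
  have hE1 : D ≤ |β - α| * y + |γ - β| * x := by
    have h : un * vm - um * vn = un * (vm - um) - um * (vn - un) := by ring
    rw [hD_def, h]
    calc |un * (vm - um) - um * (vn - un)| ≤ |un * (vm - um)| + |um * (vn - un)| := abs_sub _ _
    _ = |un| * |vm - um| + |vn - un| * |um| := by rw [abs_mul, abs_mul]; ring
    _ ≤ |β - α| * y + |γ - β| * x := by
        rw [hun, hvn]
        have h' : γ - α - (β - α) = γ - β := by ring
        rw [h']
        exact add_le_add (mul_le_mul_of_nonneg_left hym (abs_nonneg _))
          (mul_le_mul_of_nonneg_left hum (abs_nonneg _))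
  have hE2 : D ≤ |γ - α| * y + |β - γ| * z := by
    have h : un * vm - um * vn = -(vn * (um - vm) - vm * (un - vn)) := by ring
    rw [hD_def, h, abs_neg]
    calc |vn * (um - vm) - vm * (un - vn)| ≤ |vn * (um - vm)| + |vm * (un - vn)| := abs_sub _ _
    _ = |vn| * |um - vm| + |un - vn| * |vm| := by rw [abs_mul, abs_mul]; ring
    _ ≤ |γ - α| * y + |β - γ| * z := by
        rw [hun, hvn]
        have h1 : β - α - (γ - α) = β - γ := by ring
        have h2 : |um - vm| = |vm - um| := abs_sub_comm _ _
        rw [h1, h2]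
        exact add_le_add (mul_le_mul_of_nonneg_left hym (abs_nonneg _))
          (mul_le_mul_of_nonneg_left hvm (abs_nonneg _))
  show D ≤ (|α| + |β| + |γ|) * s

  rcases le_total α β with h1 | h1 <;> rcases le_total β γ with h2 | h2 <;>
    rcases le_total α γ with h3 | h3
  · -- α ≤ β ≤ γ : E1
    rw [abs_of_nonneg (by linarith : (0:ℝ) ≤ β - α), abs_of_nonneg (by linarith : (0:ℝ) ≤ γ - β)] at hE1
    exact step_bound D _ _  x y s (|α| + |β| + |γ|) hE1 (by linarith) (by linarith) hys hxs (by linarith) hs0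
  · -- α ≤ β ≤ γ ≤ α: all equal, D = 0
    have : un = 0 := by rw [hun]; linarith
    have h' : vn = 0 := by rw [hvn]; linarith
    rw [hD_def, this, h']
    simp
    positivity
  · -- sorted α ≤ γ ≤ β : E2
    rw [abs_of_nonneg (by linarith : (0:ℝ) ≤ γ - α), abs_of_nonneg (by linarith : (0:ℝ) ≤ β - γ)] at hE2
    exact step_bound D _ _  z y s (|α| + |β| + |γ|) hE2 (by linarith) (by linarith) hys hzs (by linarith) hs0
  · -- sorted γ ≤ α ≤ β : E0
    rw [abs_of_nonneg (by linarith : (0:ℝ) ≤ β - α), abs_of_nonpos (by linarith : γ - α ≤ 0)] at hE0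
    rw [(by ring : -(γ - α) = α - γ)] at hE0
    exact step_bound D _ _  x z s (|α| + |β| + |γ|) hE0 (by linarith) (by linarith) hzs hxs (by linarith) hs0
  · -- sorted β ≤ α ≤ γ : E0
    rw [abs_of_nonpos (by linarith : β - α ≤ 0), abs_of_nonneg (by linarith : (0:ℝ) ≤ γ - α)] at hE0
    rw [(by ring : -(β - α) = α - β)] at hE0
    exact step_bound D _ _  x z s (|α| + |β| + |γ|) hE0 (by linarith) (by linarith) hzs hxs (by linarith) hs0
  · -- sorted β ≤ γ ≤ α : E2
    rw [abs_of_nonpos (by linarith : γ - α ≤ 0), abs_of_nonpos (by linarith : β - γ ≤ 0)] at hE2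
    rw [(by ring : -(γ - α) = α - γ), (by ring : -(β - γ) = γ - β)] at hE2
    exact step_bound D _ _  z y s (|α| + |β| + |γ|) hE2 (by linarith) (by linarith) hys hzs (by linarith) hs0
  · -- β ≤ α, γ ≤ β, α ≤ γ : all equal
    have : un = 0 := by rw [hun]; linarith
    have h' : vn = 0 := by rw [hvn]; linarith
    rw [hD_def, this, h']
    simp
    positivity
  · -- sorted γ ≤ β ≤ α : E1
    rw [abs_of_nonpos (by linarith : β - α ≤ 0), abs_of_nonpos (by linarith : γ - β ≤ 0)] at hE1
    rw [(by ring : -(β - α) = α - β), (by ring : -(γ - β) = β - γ)] at hE1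
    exact step_bound D _ _  x y s (|α| + |β| + |γ|) hE1 (by linarith) (by linarith) hys hxs (by linarith) hs0


lemma norm_sq_combo {F : Type*} [NormedAddCommGroup F] [InnerProductSpace ℝ F]
    {n m : F} (hn : ‖n‖ = 1) (hm : ‖m‖ = 1) (hnm : ⟪n, m⟫ = 0) (s t : ℝ) :
    ‖s • n + t • m‖ ^ 2 = s ^ 2 + t ^ 2 := by
  have hmn : ⟪m, n⟫ = 0 := by rw [real_inner_comm]; exact hnm
  have h1 : ⟪n, n⟫ = 1 := by rw [real_inner_self_eq_norm_sq, hn]; norm_num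
  have h2 : ⟪m, m⟫ = 1 := by rw [real_inner_self_eq_norm_sq, hm]; norm_num
  rw [← real_inner_self_eq_norm_sq]
  simp only [inner_add_left, inner_add_right, real_inner_smul_left, real_inner_smul_right,
    h1, h2, hnm, hmn]
  ring


set_option maxHeartbeats 1600000 in
/-- `P` and `P'` are distinct planes in `ℝ³` meeting in the line `ℓ = P ⊓ P'`;
`a, b, c` are affinely independent points of `P'`; `h' x` is the distance from `x`
to `ℓ`; `r` is the inradius of triangle `abc`.  Then `2r ≤ h' a + h' b + h' c`. -/
theorem stmt_3 (P P' : AffineSubspace ℝ (EuclideanSpace ℝ (Fin 3)))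
    (hP : Module.finrank ℝ P.direction = 2) (hP' : Module.finrank ℝ P'.direction = 2)
    (hne : P ≠ P')
    (hmeet : ((P ⊓ P' : AffineSubspace ℝ (EuclideanSpace ℝ (Fin 3))) :
      Set (EuclideanSpace ℝ (Fin 3))).Nonempty)
    (a b c : EuclideanSpace ℝ (Fin 3)) (ha : a ∈ P') (hb : b ∈ P') (hc : c ∈ P')
    (hind : ¬ Collinear ℝ ({a, b, c} : Set _)) :
    2 * triInradius a b c ≤
      Metric.infDist a ((P ⊓ P' : AffineSubspace ℝ (EuclideanSpace ℝ (Fin 3))) : Set _) +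
      Metric.infDist b ((P ⊓ P' : AffineSubspace ℝ (EuclideanSpace ℝ (Fin 3))) : Set _) +
      Metric.infDist c ((P ⊓ P' : AffineSubspace ℝ (EuclideanSpace ℝ (Fin 3))) : Set _) := by
  obtain ⟨p, hp⟩ := hmeet
  have hpP : p ∈ P := hp.1
  have hpP' : p ∈ P' := hp.2
  have hLP : (P ⊓ P').direction ≤ P.direction := AffineSubspace.direction_le inf_le_left
  have hLP' : (P ⊓ P').direction ≤ P'.direction := AffineSubspace.direction_le inf_le_right
  -- L has rank at most 1
  have hL1 : finrank ℝ (P ⊓ P').direction ≤ 1 := by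
    by_contra hcon
    push_neg at hcon
    have e1 : (P ⊓ P').direction = P.direction :=
      Submodule.eq_of_le_of_finrank_le hLP (by omega)
    have e2 : (P ⊓ P').direction = P'.direction :=
      Submodule.eq_of_le_of_finrank_le hLP' (by omega)
    exact hne (AffineSubspace.ext_of_direction_eq (by rw [← e1, e2]) ⟨p, hpP, hpP'⟩)
  -- pick unit n ∈ D' orthogonal to the direction of the line
  obtain ⟨n, hn_norm, hnD', hnL⟩ :
      ∃ n : E3, ‖n‖ = 1 ∧ n ∈ P'.direction ∧ ∀ w ∈ (P ⊓ P').direction, ⟪n, w⟫ = 0 := by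
    have hK1 : 0 < finrank ℝ ((P ⊓ P').directionᗮ ⊓ P'.direction : Submodule ℝ E3) := by
      have := Submodule.finrank_add_inf_finrank_orthogonal hLP'
      omega
    obtain ⟨v₀, hv₀, hv₀0⟩ := Submodule.exists_mem_ne_zero_of_ne_bot
      (by intro h; rw [h] at hK1; simp at hK1 :
        ((P ⊓ P').directionᗮ ⊓ P'.direction : Submodule ℝ E3) ≠ ⊥)
    refine ⟨‖v₀‖⁻¹ • v₀, norm_smul_inv_norm hv₀0, Submodule.smul_mem _ _ hv₀.2, ?_⟩
    intro w hw
    have h0 := (Submodule.mem_orthogonal _ _).1 hv₀.1 w hw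
    rw [real_inner_smul_left, real_inner_comm, h0, mul_zero]
  have hn0 : n ≠ 0 := by intro h; rw [h] at hn_norm; simp at hn_norm
  -- pick unit m ∈ D' orthogonal to n, spanning the complement of n in D'
  obtain ⟨m, hm_norm, hmD', hnm, hK2span⟩ :
      ∃ m : E3, ‖m‖ = 1 ∧ m ∈ P'.direction ∧ ⟪n, m⟫ = 0 ∧
        ((ℝ ∙ n)ᗮ ⊓ P'.direction : Submodule ℝ E3) = ℝ ∙ m := by
    have hnsp : (ℝ ∙ n) ≤ P'.direction := by rwa [Submodule.span_singleton_le_iff_mem]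
    have hK2 : finrank ℝ ((ℝ ∙ n)ᗮ ⊓ P'.direction : Submodule ℝ E3) = 1 := by
      have := Submodule.finrank_add_inf_finrank_orthogonal hnsp
      have h1 : finrank ℝ (ℝ ∙ n) = 1 := finrank_span_singleton hn0
      omega
    obtain ⟨m₀, hm₀, hm₀0⟩ := Submodule.exists_mem_ne_zero_of_ne_bot
      (by intro h; rw [h] at hK2; simp at hK2 :
        ((ℝ ∙ n)ᗮ ⊓ P'.direction : Submodule ℝ E3) ≠ ⊥)
    have hmK2 : ‖m₀‖⁻¹ • m₀ ∈ ((ℝ ∙ n)ᗮ ⊓ P'.direction : Submodule ℝ E3) :=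
      Submodule.smul_mem _ _ hm₀
    have hm_norm : ‖(‖m₀‖⁻¹ • m₀ : E3)‖ = 1 := norm_smul_inv_norm hm₀0
    refine ⟨‖m₀‖⁻¹ • m₀, hm_norm, hmK2.2,
      Submodule.mem_orthogonal_singleton_iff_inner_right.1 hmK2.1, ?_⟩
    symm
    refine Submodule.eq_of_le_of_finrank_le ?_ ?_
    · rwa [Submodule.span_singleton_le_iff_mem]
    · rw [hK2, finrank_span_singleton]
      intro h; rw [h] at hm_norm; simp at hm_norm
  have hm0 : m ≠ 0 := by intro h; rw [h] at hm_norm; simp at hm_norm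
  -- representation of vectors of D'
  have repr : ∀ w ∈ P'.direction, w = ⟪n, w⟫ • n + ⟪m, w⟫ • m := by
    intro w hw
    have hw' : w - ⟪n, w⟫ • n ∈ ((ℝ ∙ n)ᗮ ⊓ P'.direction : Submodule ℝ E3) := by
      refine Submodule.mem_inf.2 ⟨?_, Submodule.sub_mem _ hw (Submodule.smul_mem _ _ hnD')⟩
      rw [Submodule.mem_orthogonal_singleton_iff_inner_right]
      rw [inner_sub_right, real_inner_smul_right, real_inner_self_eq_norm_sq, hn_norm]
      ring
    rw [hK2span, Submodule.mem_span_singleton] at hw'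
    obtain ⟨t, ht⟩ := hw'
    have hw2 : w = ⟪n, w⟫ • n + t • m := by rw [ht]; abel
    have hmw : ⟪m, w⟫ = t := by
      nth_rewrite 1 [hw2]
      rw [inner_add_right, real_inner_smul_right, real_inner_smul_right,
        real_inner_comm n m, hnm, real_inner_self_eq_norm_sq, hm_norm]
      ring
    rw [hmw]; exact hw2
  -- vertices are distinct
  have hab : a ≠ b := by
    rintro rfl
    exact hind (by simpa using collinear_pair ℝ a c)
  -- coordinates
  have huD : b - a ∈ P'.direction := by
    simpa using AffineSubspace.vsub_mem_direction hb ha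
  have hvD : c - a ∈ P'.direction := by
    simpa using AffineSubspace.vsub_mem_direction hc ha
  set un : ℝ := ⟪n, b - a⟫ with hun_def
  set um : ℝ := ⟪m, b - a⟫ with hum_def
  set vn : ℝ := ⟪n, c - a⟫ with hvn_def
  set vm : ℝ := ⟪m, c - a⟫ with hvm_def
  have hu_rep : b - a = un • n + um • m := repr _ huD
  have hv_rep : c - a = vn • n + vm • m := repr _ hvD
  have hcb_rep : c - b = (vn - un) • n + (vm - um) • m := by
    have h1 : c - b = (c - a) - (b - a) := by abel
    rw [h1, hv_rep, hu_rep]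
    module
  set x : ℝ := dist a b with hx_def
  set y : ℝ := dist b c with hy_def
  set z : ℝ := dist c a with hz_def
  have hx2 : x ^ 2 = un ^ 2 + um ^ 2 := by
    rw [hx_def, dist_eq_norm, norm_sub_rev, hu_rep, norm_sq_combo hn_norm hm_norm hnm]
  have hy2 : y ^ 2 = (vn - un) ^ 2 + (vm - um) ^ 2 := by
    rw [hy_def, dist_eq_norm, norm_sub_rev, hcb_rep, norm_sq_combo hn_norm hm_norm hnm]
  have hz2 : z ^ 2 = vn ^ 2 + vm ^ 2 := by
    rw [hz_def, dist_eq_norm, hv_rep, norm_sq_combo hn_norm hm_norm hnm]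
  have hx0 : 0 ≤ x := dist_nonneg
  have hy0 : 0 ≤ y := dist_nonneg
  have hz0 : 0 ≤ z := dist_nonneg
  have sq_le_abs : ∀ t s : ℝ, 0 ≤ s → t ^ 2 ≤ s ^ 2 → |t| ≤ s := by
    intro t s hs h
    rw [← Real.sqrt_sq_eq_abs, ← Real.sqrt_sq hs]
    exact Real.sqrt_le_sqrt h
  have hum : |um| ≤ x := sq_le_abs _ _ hx0 (by rw [hx2]; nlinarith [sq_nonneg un])
  have hvm : |vm| ≤ z := sq_le_abs _ _ hz0 (by rw [hz2]; nlinarith [sq_nonneg vn])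
  have hym : |vm - um| ≤ y := sq_le_abs _ _ hy0 (by rw [hy2]; nlinarith [sq_nonneg (vn - un)])
  have htx : x ≤ y + z := by
    rw [hx_def, hy_def, hz_def]
    linarith [dist_triangle a c b, dist_comm a c, dist_comm c b]
  have hty : y ≤ x + z := by
    rw [hx_def, hy_def, hz_def]
    linarith [dist_triangle b a c, dist_comm b a, dist_comm a c]
  have htz : z ≤ x + y := by
    rw [hx_def, hy_def, hz_def]
    linarith [dist_triangle c b a, dist_comm c b, dist_comm b a]
  -- f values
  set α : ℝ := ⟪n, a - p⟫ with hα_def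
  set β : ℝ := ⟪n, b - p⟫ with hβ_def
  set γ : ℝ := ⟪n, c - p⟫ with hγ_def
  have hun : un = β - α := by
    rw [hun_def, hβ_def, hα_def, (by abel : b - a = (b - p) - (a - p)), inner_sub_right]
  have hvn : vn = γ - α := by
    rw [hvn_def, hγ_def, hα_def, (by abel : c - a = (c - p) - (a - p)), inner_sub_right]
  -- distance to the line bounds |f|
  have hdist : ∀ q : E3, |⟪n, q - p⟫| ≤ infDist q ((P ⊓ P' : AffineSubspace ℝ E3) : Set E3) := by
    intro q
    by_contra hcon
    push_neg at hcon
    obtain ⟨w, hw, hwd⟩ := (infDist_lt_iff ⟨p, hp⟩).1 hcon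
    have hw0 : ⟪n, w - p⟫ = 0 := by
      have : w -ᵥ p ∈ (P ⊓ P').direction := AffineSubspace.vsub_mem_direction hw hp
      exact hnL _ (by simpa using this)
    have hsplit : ⟪n, q - p⟫ = ⟪n, q - w⟫ := by
      rw [(by abel : q - p = (q - w) + (w - p)), inner_add_right, hw0, add_zero]
    have hCS : |⟪n, q - w⟫| ≤ dist q w := by
      calc |⟪n, q - w⟫| ≤ ‖n‖ * ‖q - w‖ := abs_real_inner_le_norm n _
      _ = dist q w := by rw [hn_norm, one_mul, dist_eq_norm]
    rw [hsplit] at hwd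
    linarith [hCS]
  -- Heron's formula
  have hH : heronArea x y z = |un * vm - um * vn| / 2 := by
    have e : ((x + y + z) / 2) * ((x + y + z) / 2 - x) * ((x + y + z) / 2 - y) *
        ((x + y + z) / 2 - z) = (2 * x ^ 2 * y ^ 2 + 2 * y ^ 2 * z ^ 2 + 2 * z ^ 2 * x ^ 2
          - (x ^ 2) ^ 2 - (y ^ 2) ^ 2 - (z ^ 2) ^ 2) / 16 := by ring
    rw [hx2, hy2, hz2] at e
    have e2 : ((x + y + z) / 2) * ((x + y + z) / 2 - x) * ((x + y + z) / 2 - y) *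
        ((x + y + z) / 2 - z) = ((un * vm - um * vn) / 2) ^ 2 := by rw [e]; ring
    rw [heronArea, e2, Real.sqrt_sq_eq_abs, abs_div]
    norm_num
  -- main width bound
  have key : |un * vm - um * vn| ≤ (|α| + |β| + |γ|) * ((x + y + z) / 2) :=
    width_bound α β γ un um vn vm x y z hun hvn hum hvm hym htx hty htz
  have hxpos : 0 < x := by rw [hx_def]; exact dist_pos.2 hab
  have hspos : 0 < (x + y + z) / 2 := by linarith
  have hfinal : 2 * triInradius a b c ≤ |α| + |β| + |γ| := by
    rw [triInradius, ← hx_def, ← hy_def, ← hz_def, hH]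
    rw [(by ring : 2 * (|un * vm - um * vn| / 2 / ((x + y + z) / 2))
      = |un * vm - um * vn| / ((x + y + z) / 2)), div_le_iff₀ hspos]
    exact key
  have h1 := hdist a
  have h2 := hdist b
  have h3 := hdist c
  rw [← hα_def] at h1
  rw [← hβ_def] at h2
  rw [← hγ_def] at h3
  linarith
end

section
/- Let γ : ℝ → S³ ⊂ ℝ⁴ be a smooth ℤ-periodic parameterization of a knot with nonvanishing derivative, and let τ(γ) > 0 be its thickness, defined as the infimum of radii of circles in ℝ⁴ lying in S³ passing through at least three points of the knot. If y₁, y₂ are points on the knot with |y₁ − y₂| < 2τ(γ), and P is the 2-sphere in S³ having y₁ and y₂ as antipodal points, then γ intersects P transversely and only at y₁ and y₂. -/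
/-- The circumradius of the triangle `a b c`, i.e. the radius of the unique circle
through three affinely independent points. -/
noncomputable def circumradius {E : Type*} [NormedAddCommGroup E] (a b c : E) : ℝ :=
  dist a b * dist b c * dist c a / (4 * heronArea (dist a b) (dist b c) (dist c a))

/-- The thickness of a closed curve `γ` on the unit sphere: the infimum of radii of
circles passing through at least three (distinct) points of the curve.  (A circle
through three points of `S³` automatically lies in `S³`, and its radius is the
circumradius of the three points.) -/
noncomputable def knotThickness {E : Type*} [NormedAddCommGroup E] (γ : ℝ → E) : ℝ :=
  sInf {ρ : ℝ | ∃ t₁ t₂ t₃ : ℝ, γ t₁ ≠ γ t₂ ∧ γ t₁ ≠ γ t₃ ∧ γ t₂ ≠ γ t₃ ∧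
    ρ = circumradius (γ t₁) (γ t₂) (γ t₃)}


open Filter Topology
open scoped RealInnerProductSpace

section aux

variable {E : Type*} [NormedAddCommGroup E] [InnerProductSpace ℝ E]

lemma heron_arg (p h q ip : ℝ) (h1 : p^2 + h^2 - q^2 = 2*ip) :
    ((p + h + q) / 2) * ((p + h + q) / 2 - p) * ((p + h + q) / 2 - h) *
      ((p + h + q) / 2 - q) = (p^2*h^2 - ip^2)/4 := by
  have hip : ip = (p^2 + h^2 - q^2)/2 := by linarith
  rw [hip]; ring

lemma circ_formula (x a b : E) :
    circumradius x a b = dist x a * dist a b * dist b x /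
      (2 * Real.sqrt ((dist x a)^2 * (dist a b)^2 - (⟪x - a, b - a⟫)^2)) := by
  have key : (dist x a)^2 + (dist a b)^2 - (dist b x)^2 = 2 * ⟪x - a, b - a⟫ := by
    have e3 : dist b x ^ 2 = ‖x - a‖^2 - 2 * ⟪x - a, b - a⟫ + ‖b - a‖^2 := by
      rw [dist_comm, dist_eq_norm, show x - b = (x - a) - (b - a) by abel, norm_sub_sq_real]
    rw [e3, dist_eq_norm x a, dist_eq_norm a b, norm_sub_rev a b]
    ring
  unfold circumradius heronArea
  rw [heron_arg _ _ _ _ key, Real.sqrt_div' _ (by norm_num : (0:ℝ) ≤ 4),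
    show Real.sqrt 4 = 2 by rw [show (4:ℝ) = 2^2 by norm_num, Real.sqrt_sq (by norm_num)]]
  congr 1
  ring


lemma circ_right (x a b : E) (hxa : x ≠ a) (hxb : x ≠ b)
    (horth : ⟪x - a, x - b⟫ = 0) : circumradius x a b = dist a b / 2 := by
  have hp : (0:ℝ) < dist x a := dist_pos.2 hxa
  have hq : (0:ℝ) < dist b x := dist_pos.2 fun h => hxb h.symm
  have hip : ⟪x - a, b - a⟫ = dist x a ^ 2 := by
    have : (b : E) - a = (x - a) - (x - b) := by abel
    rw [this, inner_sub_right, horth, sub_zero, real_inner_self_eq_norm_sq, dist_eq_norm]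
  have hpyth : dist a b ^ 2 = dist x a ^ 2 + dist b x ^ 2 := by
    have h1 : (a : E) - b = -(x - a) + (x - b) := by abel
    have : ‖a - b‖^2 = ‖x - a‖^2 + ‖x - b‖^2 := by
      rw [h1, @norm_add_sq_real, inner_neg_left, horth, norm_neg]
      ring
    rw [dist_eq_norm a b, dist_eq_norm x a, dist_comm b x, dist_eq_norm x b, this]
  rw [circ_formula, hip]
  have hX : dist x a ^ 2 * dist a b ^ 2 - (dist x a ^ 2) ^ 2
      = (dist x a * dist b x)^2 := by rw [hpyth]; ring
  rw [hX, Real.sqrt_sq (by positivity)]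
  field_simp

lemma circ_nonneg (x a b : E) : 0 ≤ circumradius x a b := by
  unfold circumradius
  apply div_nonneg (by positivity)
  have := Real.sqrt_nonneg (((dist x a + dist a b + dist b x) / 2) *
    ((dist x a + dist a b + dist b x) / 2 - dist x a) *
    ((dist x a + dist a b + dist b x) / 2 - dist a b) *
    ((dist x a + dist a b + dist b x) / 2 - dist b x))
  unfold heronArea
  positivity

lemma thickness_bddBelow {E' : Type*} [NormedAddCommGroup E'] (γ : ℝ → E') :
    BddBelow {ρ : ℝ | ∃ t₁ t₂ t₃ : ℝ, γ t₁ ≠ γ t₂ ∧ γ t₁ ≠ γ t₃ ∧ γ t₂ ≠ γ t₃ ∧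
      ρ = circumradius (γ t₁) (γ t₂) (γ t₃)} := by
  refine ⟨0, fun ρ hρ => ?_⟩
  obtain ⟨t₁, t₂, t₃, -, -, -, rfl⟩ := hρ
  unfold circumradius
  apply div_nonneg (by positivity)
  have := Real.sqrt_nonneg (((dist (γ t₁) (γ t₂) + dist (γ t₂) (γ t₃) + dist (γ t₃) (γ t₁)) / 2) *
    ((dist (γ t₁) (γ t₂) + dist (γ t₂) (γ t₃) + dist (γ t₃) (γ t₁)) / 2 - dist (γ t₁) (γ t₂)) *
    ((dist (γ t₁) (γ t₂) + dist (γ t₂) (γ t₃) + dist (γ t₃) (γ t₁)) / 2 - dist (γ t₂) (γ t₃)) *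
    ((dist (γ t₁) (γ t₂) + dist (γ t₂) (γ t₃) + dist (γ t₃) (γ t₁)) / 2 - dist (γ t₃) (γ t₁)))
  unfold heronArea
  positivity

/-- A point of the curve on the sphere `P` which is orthogonal-circle related:
if `x` is on the unit sphere and on `P`, then the angle `y₁ x y₂` is right. -/
lemma on_P_orth (x y₁ y₂ : E) (hx : ‖x‖ = 1) (h1 : ‖y₁‖ = 1) (h2 : ‖y₂‖ = 1)
    (hP : ⟪x, midpoint ℝ y₁ y₂⟫ = ⟪midpoint ℝ y₁ y₂, midpoint ℝ y₁ y₂⟫) :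
    ⟪x - y₁, x - y₂⟫ = 0 := by
  have hm : midpoint ℝ y₁ y₂ = (2:ℝ)⁻¹ • (y₁ + y₂) := midpoint_eq_smul_add ..
  rw [hm, inner_smul_right, inner_add_right, real_inner_smul_left, inner_smul_right,
    inner_add_right, inner_add_left, inner_add_left] at hP
  have hxx : ⟪x, x⟫ = 1 := by rw [real_inner_self_eq_norm_sq, hx]; norm_num
  have h11 : ⟪y₁, y₁⟫ = 1 := by rw [real_inner_self_eq_norm_sq, h1]; norm_num
  have h22 : ⟪y₂, y₂⟫ = 1 := by rw [real_inner_self_eq_norm_sq, h2]; norm_num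
  have h21 : ⟪y₂, y₁⟫ = ⟪y₁, y₂⟫ := real_inner_comm ..
  rw [inner_sub_left, inner_sub_right, inner_sub_right, hxx]
  rw [h11, h21, h22] at hP
  have hc : ⟪y₁, x⟫ = ⟪x, y₁⟫ := real_inner_comm ..
  rw [hc]
  linarith

lemma thickness_le (γ : ℝ → E) {t₁ t₂ t₃ : ℝ} (h12 : γ t₁ ≠ γ t₂) (h13 : γ t₁ ≠ γ t₃)
    (h23 : γ t₂ ≠ γ t₃) : knotThickness γ ≤ circumradius (γ t₁) (γ t₂) (γ t₃) :=
  csInf_le (thickness_bddBelow γ) ⟨t₁, t₂, t₃, h12, h13, h23, rfl⟩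

lemma part1 (γ : ℝ → E) (hS : ∀ t, ‖γ t‖ = 1)
    (y₁ y₂ : E) (s₁ s₂ : ℝ) (hs₁ : γ s₁ = y₁) (hs₂ : γ s₂ = y₂) (hne : y₁ ≠ y₂)
    (hclose : dist y₁ y₂ < 2 * knotThickness γ) (t : ℝ)
    (hP : ⟪γ t, midpoint ℝ y₁ y₂⟫ = ⟪midpoint ℝ y₁ y₂, midpoint ℝ y₁ y₂⟫) :
    γ t = y₁ ∨ γ t = y₂ := by
  by_contra hcon
  push_neg at hcon
  obtain ⟨h1, h2⟩ := hcon
  have horth := on_P_orth (γ t) y₁ y₂ (hS t) (hs₁ ▸ hS s₁) (hs₂ ▸ hS s₂) hP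
  have hval : circumradius (γ t) y₁ y₂ = dist y₁ y₂ / 2 := circ_right _ _ _ h1 h2 horth
  have hle : knotThickness γ ≤ circumradius (γ t) y₁ y₂ := by
    have := thickness_le γ (t₁ := t) (t₂ := s₁) (t₃ := s₂)
      (by rw [hs₁]; exact h1) (by rw [hs₂]; exact h2) (by rw [hs₁, hs₂]; exact hne)
    rwa [hs₁, hs₂] at this
  rw [hval] at hle
  linarith

lemma key (γ : ℝ → E) (hsm : ContDiff ℝ (⊤ : ℕ∞) γ) (hS : ∀ t, ‖γ t‖ = 1)
    (hd : ∀ t, deriv γ t ≠ 0)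
    (y₁ y₂ : E) (s₁ s₂ : ℝ) (hs₁ : γ s₁ = y₁) (hs₂ : γ s₂ = y₂) (hne : y₁ ≠ y₂)
    (hclose : dist y₁ y₂ < 2 * knotThickness γ) (t : ℝ) (ht : γ t = y₁)
    (hperp : ⟪deriv γ t, midpoint ℝ y₁ y₂⟫ = 0) : False := by
  set v := deriv γ t with hv
  have hder : HasDerivAt γ v t := (hsm.differentiable (by simp) t).hasDerivAt
  have hv0 : v ≠ 0 := hd t
  -- the tangent vector is orthogonal to `γ t`
  have hconst : (fun s => ⟪γ s, γ s⟫) = fun _ : ℝ => (1:ℝ) := by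
    funext s
    rw [real_inner_self_eq_norm_sq, hS s]; norm_num
  have hD1 : HasDerivAt (fun s => ⟪γ s, γ s⟫) (⟪γ t, v⟫ + ⟪v, γ t⟫) t := hder.inner ℝ hder
  have hzero : ⟪γ t, v⟫ + ⟪v, γ t⟫ = 0 := by
    rw [hconst] at hD1
    exact hD1.unique (hasDerivAt_const t 1)
  have hvy₁ : ⟪v, y₁⟫ = 0 := by
    have hcomm : ⟪γ t, v⟫ = ⟪v, γ t⟫ := real_inner_comm ..
    rw [← ht]; linarith
  have hvy₂ : ⟪v, y₂⟫ = 0 := by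
    rw [midpoint_eq_smul_add, invOf_eq_inv, inner_smul_right, inner_add_right] at hperp
    have h2 : (2:ℝ)⁻¹ ≠ 0 := by norm_num
    have := (mul_eq_zero.1 hperp).resolve_left h2
    linarith
  set c : E := y₂ - y₁ with hc
  have hvc : ⟪v, c⟫ = 0 := by rw [hc, inner_sub_right]; linarith
  set h : ℝ := dist y₁ y₂ with hh
  have hhpos : 0 < h := dist_pos.2 hne
  -- slope limits
  have hslope : Tendsto (slope γ t) (𝓝[≠] t) (𝓝 v) := hasDerivAt_iff_tendsto_slope.mp hder
  have hnorm : Tendsto (fun s => ‖slope γ t s‖) (𝓝[≠] t) (𝓝 ‖v‖) := hslope.norm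
  have hip : HasDerivAt (fun s => ⟪γ s, c⟫) 0 t := by
    have := hder.inner ℝ (hasDerivAt_const t c)
    simpa [hvc] using this
  have hipslope : Tendsto (slope (fun s => ⟪γ s, c⟫) t) (𝓝[≠] t) (𝓝 0) :=
    hasDerivAt_iff_tendsto_slope.mp hip
  -- the quotient tends to 0
  set N : ℝ → ℝ := fun s => slope (fun s => ⟪γ s, c⟫) t s * slope (fun s => ⟪γ s, c⟫) t s
    with hN
  set D : ℝ → ℝ := fun s => ‖slope γ t s‖ * ‖slope γ t s‖ with hD
  have hDlim : Tendsto D (𝓝[≠] t) (𝓝 (‖v‖ * ‖v‖)) := hnorm.mul hnorm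
  have hGlim : Tendsto (fun s => N s / D s) (𝓝[≠] t) (𝓝 0) := by
    have := (hipslope.mul hipslope).div hDlim
      (mul_ne_zero (norm_ne_zero_iff.2 hv0) (norm_ne_zero_iff.2 hv0))
    rw [zero_mul, zero_div] at this; exact this
  -- the "nice" function and its limit
  set Φ : ℝ → ℝ := fun s => h * dist y₂ (γ s) / (2 * Real.sqrt (h^2 - N s / D s)) with hΦ
  have hγt : Tendsto γ (𝓝[≠] t) (𝓝 y₁) := by
    have h0 : Tendsto γ (𝓝[≠] t) (𝓝 (γ t)) :=
      (hsm.continuous.tendsto t).mono_left nhdsWithin_le_nhds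
    rwa [ht] at h0
  have hnum : Tendsto (fun s => h * dist y₂ (γ s)) (𝓝[≠] t) (𝓝 (h * h)) := by
    have : Tendsto (fun s => dist y₂ (γ s)) (𝓝[≠] t) (𝓝 (dist y₂ y₁)) :=
      tendsto_const_nhds.dist hγt
    rw [dist_comm] at this
    exact tendsto_const_nhds.mul this
  have hden : Tendsto (fun s => 2 * Real.sqrt (h^2 - N s / D s)) (𝓝[≠] t) (𝓝 (2 * h)) := by
    have h1 : Tendsto (fun s => h^2 - N s / D s) (𝓝[≠] t) (𝓝 (h^2 - 0)) :=
      tendsto_const_nhds.sub hGlim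
    have h2 : Tendsto (fun s => Real.sqrt (h^2 - N s / D s)) (𝓝[≠] t) (𝓝 (Real.sqrt (h^2 - 0))) :=
      (Real.continuous_sqrt.continuousAt.tendsto.comp h1)
    rw [sub_zero, Real.sqrt_sq hhpos.le] at h2
    exact tendsto_const_nhds.mul h2
  have hΦlim : Tendsto Φ (𝓝[≠] t) (𝓝 (h / 2)) := by
    have := hnum.div hden (by positivity : (0:ℝ) < 2 * h).ne'
    have heq : h * h / (2 * h) = h / 2 := by field_simp
    rwa [heq] at this
  -- eventual equality with the circumradius
  have hev_ne : ∀ᶠ s in 𝓝[≠] t, γ s ≠ y₁ ∧ 0 < ‖slope γ t s‖ := by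
    have h1 : ∀ᶠ s in 𝓝[≠] t, 0 < ‖slope γ t s‖ :=
      hnorm.eventually_const_lt (norm_pos_iff.2 hv0)
    filter_upwards [h1, self_mem_nhdsWithin] with s hs hst
    refine ⟨?_, hs⟩
    intro hcon
    apply absurd hs
    simp [slope, hcon, ht, vsub_eq_sub]
  have heq : ∀ᶠ s in 𝓝[≠] t, circumradius (γ s) y₁ y₂ = Φ s := by
    filter_upwards [hev_ne, self_mem_nhdsWithin] with s hs hst
    obtain ⟨hne₁, hpos⟩ := hs
    have hst' : s - t ≠ 0 := sub_ne_zero.2 hst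
    have hp : (0:ℝ) < dist (γ s) y₁ := dist_pos.2 hne₁
    set p : ℝ := dist (γ s) y₁ with hpe
    set q : ℝ := dist y₂ (γ s) with hqe
    set ip : ℝ := ⟪γ s - y₁, c⟫ with hipe
    -- slope identities
    have hsl1 : slope (fun s => ⟪γ s, c⟫) t s = (s - t)⁻¹ * ip := by
      rw [slope_def_field]; rw [hipe, ← ht, inner_sub_left]; ring
    have hsl2 : ‖slope γ t s‖ = |s - t|⁻¹ * p := by
      rw [slope, norm_smul, norm_inv, Real.norm_eq_abs, hpe, dist_eq_norm, ← ht,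
        vsub_eq_sub]
    have hND : N s / D s = ip * ip / (p * p) := by
      simp only [hN, hD]
      rw [hsl1, hsl2]
      rw [show (s - t)⁻¹ * ip * ((s - t)⁻¹ * ip) = ((s-t)⁻¹ * (s-t)⁻¹) * (ip * ip) by ring,
        show |s - t|⁻¹ * p * (|s - t|⁻¹ * p) = ((s-t)⁻¹ * (s-t)⁻¹) * (p * p) by
          rw [show |s-t|⁻¹ * p * (|s-t|⁻¹ * p) = (|s-t|⁻¹ * |s-t|⁻¹) * (p * p) by ring,
            ← abs_inv, ← abs_mul, abs_mul_self]]
      exact mul_div_mul_left _ _ (by positivity)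
    have hXfac : p^2 * h^2 - ip^2 = p^2 * (h^2 - N s / D s) := by
      rw [hND]
      field_simp
    rw [circ_formula, ← hc, ← hh, ← hpe, ← hqe, ← hipe, hXfac,
      Real.sqrt_mul (sq_nonneg p), Real.sqrt_sq dist_nonneg, ← hpe]
    rw [hΦ]
    rw [show p * h * q / (2 * (p * Real.sqrt (h^2 - N s / D s)))
        = (p * (h * q)) / (p * (2 * Real.sqrt (h^2 - N s / D s))) by ring_nf]
    rw [mul_div_mul_left _ _ (ne_of_gt hp)]
  -- conclude
  have hlt : ∀ᶠ s in 𝓝[≠] t, circumradius (γ s) y₁ y₂ < knotThickness γ := by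
    have hΦ' : Tendsto (fun s => circumradius (γ s) y₁ y₂) (𝓝[≠] t) (𝓝 (h / 2)) :=
      hΦlim.congr' (heq.mono fun s hs => hs.symm)
    exact hΦ'.eventually_lt_const (by linarith)
  have hne₂ : ∀ᶠ s in 𝓝[≠] t, γ s ≠ y₂ := hγt.eventually_ne hne
  obtain ⟨s, hslt, hsne₂, hsne₁, -⟩ := (hlt.and (hne₂.and hev_ne)).exists
  have : knotThickness γ ≤ circumradius (γ s) y₁ y₂ := by
    have := thickness_le γ (t₁ := s) (t₂ := s₁) (t₃ := s₂)
      (by rw [hs₁]; exact hsne₁) (by rw [hs₂]; exact hsne₂) (by rw [hs₁, hs₂]; exact hne)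
    rwa [hs₁, hs₂] at this
  linarith

end aux

/-- Let `γ` be a smooth `ℤ`-periodic curve on `S³ ⊂ ℝ⁴` with nonvanishing derivative
and thickness `τ(γ) > 0`.  If `y₁ ≠ y₂` are points of the knot with
`dist y₁ y₂ < 2τ(γ)` and `P` is the 2-sphere in `S³` having `y₁, y₂` as antipodal
points (namely `P = S³ ∩ {x | ⟪x, m⟫ = ⟪m, m⟫}` where `m` is the midpoint of
`y₁, y₂`), then `γ` meets `P` only at `y₁, y₂` and transversely (the derivative is
not tangent to `P` there). -/
theorem stmt_5 (γ : ℝ → EuclideanSpace ℝ (Fin 4))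
    (hsm : ContDiff ℝ (⊤ : ℕ∞) γ) (hper : ∀ t, γ (t + 1) = γ t)
    (hS : ∀ t, ‖γ t‖ = 1) (hd : ∀ t, deriv γ t ≠ 0)
    (hτ : 0 < knotThickness γ)
    (y₁ y₂ : EuclideanSpace ℝ (Fin 4)) (hy₁ : ∃ t, γ t = y₁) (hy₂ : ∃ t, γ t = y₂)
    (hne : y₁ ≠ y₂) (hclose : dist y₁ y₂ < 2 * knotThickness γ) :
    (∀ t, (inner ℝ (γ t) (midpoint ℝ y₁ y₂) : ℝ) =
        (inner ℝ (midpoint ℝ y₁ y₂) (midpoint ℝ y₁ y₂) : ℝ) →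
      γ t = y₁ ∨ γ t = y₂) ∧
    (∀ t, (inner ℝ (γ t) (midpoint ℝ y₁ y₂) : ℝ) =
        (inner ℝ (midpoint ℝ y₁ y₂) (midpoint ℝ y₁ y₂) : ℝ) →
      (inner ℝ (deriv γ t) (midpoint ℝ y₁ y₂) : ℝ) ≠ 0) := by
  obtain ⟨s₁, hs₁⟩ := hy₁
  obtain ⟨s₂, hs₂⟩ := hy₂
  have hpart1 : ∀ t, (inner ℝ (γ t) (midpoint ℝ y₁ y₂) : ℝ) =
      (inner ℝ (midpoint ℝ y₁ y₂) (midpoint ℝ y₁ y₂) : ℝ) → γ t = y₁ ∨ γ t = y₂ :=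
    fun t hP => part1 γ hS y₁ y₂ s₁ s₂ hs₁ hs₂ hne hclose t hP
  refine ⟨hpart1, fun t hP hzero => ?_⟩
  rcases hpart1 t hP with h | h
  · exact key γ hsm hS hd y₁ y₂ s₁ s₂ hs₁ hs₂ hne hclose t h hzero
  · have hm : midpoint ℝ y₂ y₁ = midpoint ℝ y₁ y₂ := midpoint_comm ..
    exact key γ hsm hS hd y₂ y₁ s₂ s₁ hs₂ hs₁ hne.symm (by rwa [dist_comm]) t h
      (by rwa [hm])
end

section
/- Let x₁, ..., x₆ be six distinct points in ℝ⁴ such that the lines through the pairs (x₁, x₄), (x₂, x₅), (x₃, x₆) all pass through a common point p lying strictly outside the sphere ∂B containing all six points, with x₁, x₂, x₃ on the near side of the tangency sphere T_p and x₄, x₅, x₆ on the far side. If i and j are indices such that xᵢ and xⱼ lie on different lines and on different sides of T_p, then (xᵢ, xⱼ) is not a pair of minimal distance among all pairs of points from the two lines containing them. -/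
lemma line_param (c p a a' : EuclideanSpace ℝ (Fin 4)) (r : ℝ)
    (ha : dist a c = r) (ha' : dist a' c = r)
    (hcol : Collinear ℝ ({a, a', p} : Set _))
    (hna : (inner ℝ (a - p) (a - c) : ℝ) < 0)
    (hfa : 0 < (inner ℝ (a' - p) (a' - c) : ℝ)) :
    ∃ α : ℝ, a' - p = α • (a - p) ∧ 1 < α ∧
      α * ‖a - p‖ ^ 2 = ‖p - c‖ ^ 2 - r ^ 2 ∧
      ‖a - p‖ ^ 2 < ‖p - c‖ ^ 2 - r ^ 2 ∧ 0 < ‖a - p‖ ^ 2 := by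
  obtain ⟨w, hw⟩ := (collinear_iff_of_mem (show p ∈ ({a, a', p} : Set _) by simp)).mp hcol
  obtain ⟨s, hs⟩ := hw a (by simp)
  obtain ⟨s', hs'⟩ := hw a' (by simp)
  have hap : a - p = s • w := by rw [hs]; simp [vadd_eq_add]
  have hane : a - p ≠ 0 := by
    intro h; rw [h] at hna; simp at hna
  have hs0 : s ≠ 0 := by
    intro h; apply hane; rw [hap, h, zero_smul]
  set α : ℝ := s' / s with hαdef
  have hα : a' - p = α • (a - p) := by
    rw [hap, smul_smul, div_mul_cancel₀ _ hs0, hs']; simp [vadd_eq_add]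
  have hαne : α ≠ 1 := by
    intro h
    rw [h, one_smul] at hα
    have haa : a' = a := by
      have := sub_left_injective (G := EuclideanSpace ℝ (Fin 4)) hα
      exact this
    rw [haa] at hfa
    linarith
  -- abbreviations
  set u : EuclideanSpace ℝ (Fin 4) := a - p with hu
  set q : EuclideanSpace ℝ (Fin 4) := p - c with hq
  have hac : a - c = u + q := by rw [hu, hq]; abel
  have hac' : a' - c = α • u + q := by rw [← hα, hq]; abel
  set U : ℝ := ‖u‖ ^ 2 with hUdef
  set W : ℝ := (inner ℝ u q : ℝ) with hWdef
  set Q : ℝ := ‖q‖ ^ 2 with hQdef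
  have hU0 : 0 < U := by rw [hUdef]; exact pow_pos (norm_pos_iff.mpr hane) 2
  have ha2 : U + 2*W + Q = r^2 := by
    have h : ‖u + q‖ ^ 2 = r ^ 2 := by
      rw [← hac, ← dist_eq_norm, ha]
    have h2 := norm_add_sq_real u q
    rw [h] at h2
    linarith
  have ha'2 : α^2*U + 2*α*W + Q = r^2 := by
    have h : ‖α • u + q‖ ^ 2 = r ^ 2 := by
      rw [← hac', ← dist_eq_norm, ha']
    have h2 := norm_add_sq_real (α • u) q
    have e1 : ‖α • u‖ ^ 2 = α ^ 2 * U := by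
      rw [norm_smul, mul_pow, Real.norm_eq_abs, sq_abs, hUdef]
    have e2 : (inner ℝ (α • u) q : ℝ) = α * W := real_inner_smul_left u q α
    rw [h, e1, e2] at h2
    linarith
  have hna' : U + W < 0 := by
    rw [hac, inner_add_right, real_inner_self_eq_norm_sq] at hna
    rw [hUdef, hWdef]; linarith
  clear_value u q U W Q
  have h3 : (α - 1) * ((α + 1) * U + 2 * W) = 0 := by linear_combination ha'2 - ha2
  have hsum : (α + 1) * U + 2 * W = 0 := by
    rcases mul_eq_zero.mp h3 with h | h
    · exact absurd (by linarith : α = 1) hαne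
    · exact h
  have hαU : α * U = Q - r ^ 2 := by linear_combination hsum - ha2
  have hα1 : 1 < α := by nlinarith [hna', hsum, hU0]
  have hUP : U < Q - r ^ 2 := by nlinarith [hαU, hα1, hU0]
  exact ⟨α, hα, hα1, hαU, hUP, hU0⟩

set_option maxHeartbeats 1000000 in
/-- The diagonal pair (near point of one secant, far point of the other) is
never the strictly minimal-distance pair. -/
lemma key_lemma (c p a a' b b' : EuclideanSpace ℝ (Fin 4)) (r : ℝ)
    (ha : dist a c = r) (ha' : dist a' c = r)
    (hb : dist b c = r) (hb' : dist b' c = r)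
    (hca : Collinear ℝ ({a, a', p} : Set _))
    (hcb : Collinear ℝ ({b, b', p} : Set _))
    (hna : (inner ℝ (a - p) (a - c) : ℝ) < 0)
    (hfa : 0 < (inner ℝ (a' - p) (a' - c) : ℝ))
    (hnb : (inner ℝ (b - p) (b - c) : ℝ) < 0)
    (hfb : 0 < (inner ℝ (b' - p) (b' - c) : ℝ)) :
    dist a b < dist a b' ∨ dist a' b' < dist a b' := by
  obtain ⟨α, hα, hα1, hαU, hUP, hU0⟩ := line_param c p a a' r ha ha' hca hna hfa
  obtain ⟨β, hβ, hβ1, hβV, hVP, hV0⟩ := line_param c p b b' r hb hb' hcb hnb hfb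
  set u : EuclideanSpace ℝ (Fin 4) := a - p with hu
  set v : EuclideanSpace ℝ (Fin 4) := b - p with hv
  by_contra hcon
  push_neg at hcon
  obtain ⟨h1, h2⟩ := hcon
  -- express all three distances as norms of combinations of u, v
  have eab : a - b = u - v := by rw [hu, hv]; abel
  have eab' : a - b' = u - β • v := by
    rw [hu, ← hβ]; abel
  have ea'b' : a' - b' = α • u - β • v := by
    rw [← hα, ← hβ]; abel
  set U : ℝ := ‖u‖ ^ 2
  set V : ℝ := ‖v‖ ^ 2
  set k : ℝ := (inner ℝ u v : ℝ) with hk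
  have nab : dist a b ^ 2 = U + V - 2 * k := by
    rw [dist_eq_norm, eab, norm_sub_sq_real]; ring
  have nab' : dist a b' ^ 2 = U + β ^ 2 * V - 2 * (β * k) := by
    rw [dist_eq_norm, eab', norm_sub_sq_real, real_inner_smul_right, norm_smul,
      mul_pow, Real.norm_eq_abs, sq_abs]
    ring
  have na'b' : dist a' b' ^ 2 = α ^ 2 * U + β ^ 2 * V - 2 * (α * β * k) := by
    rw [dist_eq_norm, ea'b', norm_sub_sq_real, real_inner_smul_right,
      real_inner_smul_left, norm_smul, norm_smul, mul_pow, mul_pow,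
      Real.norm_eq_abs, Real.norm_eq_abs, sq_abs, sq_abs]
    ring
  clear_value u v U V k
  have E1 : U + β ^ 2 * V - 2 * (β * k) ≤ U + V - 2 * k := by
    rw [← nab, ← nab']
    exact pow_le_pow_left₀ dist_nonneg h1 2
  have E2 : U + β ^ 2 * V - 2 * (β * k) ≤ α ^ 2 * U + β ^ 2 * V - 2 * (α * β * k) := by
    rw [← na'b', ← nab']
    exact pow_le_pow_left₀ dist_nonneg h2 2
  -- derive the contradiction
  have hβ0 : (0:ℝ) < β := by linarith
  have k1 : (β + 1) * V ≤ 2 * k := by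
    by_contra hc
    push_neg at hc
    nlinarith [E1, hβ1, hc]
  have k2 : 2 * (β * k) ≤ (α + 1) * U := by
    have h : (α - 1) * (2 * (β * k)) ≤ (α - 1) * ((α + 1) * U) := by nlinarith [E2]
    exact le_of_mul_le_mul_left h (by linarith)
  have chain : β * ((β + 1) * V) ≤ (α + 1) * U := by
    calc β * ((β + 1) * V) ≤ β * (2 * k) := by
          exact mul_le_mul_of_nonneg_left k1 hβ0.le
      _ = 2 * (β * k) := by ring
      _ ≤ (α + 1) * U := k2
  have hb2 : β ^ 2 * V = β * (‖p - c‖ ^ 2 - r ^ 2) := by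
    linear_combination β * hβV
  nlinarith [chain, hb2, hβV, hαU, hUP, hβ1, hU0, hV0]

lemma aux_main (x : Fin 6 → EuclideanSpace ℝ (Fin 4))
    (c : EuclideanSpace ℝ (Fin 4)) (r : ℝ)
    (hsph : ∀ i, dist (x i) c = r)
    (p : EuclideanSpace ℝ (Fin 4))
    (hline : ∀ k : Fin 3,
      Collinear ℝ ({x ⟨k.val, Nat.lt_of_lt_of_le k.isLt (by decide)⟩,
        x ⟨k.val + 3, (Nat.add_lt_add_right k.isLt 3 : k.val + 3 < 6)⟩, p} : Set _))
    (hnear : ∀ k : Fin 6, k.val < 3 → (inner ℝ (x k - p) (x k - c) : ℝ) < 0)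
    (hfar : ∀ k : Fin 6, 3 ≤ k.val → 0 < (inner ℝ (x k - p) (x k - c) : ℝ))
    (i j : Fin 6) (hij : i.val % 3 ≠ j.val % 3)
    (hi : i.val < 3) (hj : 3 ≤ j.val) :
    ∃ u v : Fin 6, (u.val % 3 = i.val % 3 ∨ u.val % 3 = j.val % 3) ∧
      (v.val % 3 = i.val % 3 ∨ v.val % 3 = j.val % 3) ∧ u ≠ v ∧
      dist (x u) (x v) < dist (x i) (x j) := by
  obtain ⟨iv, hivlt⟩ := i
  obtain ⟨jv, hjvlt⟩ := j
  have hi' : iv < 3 := hi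
  have hj' : 3 ≤ jv := hj
  obtain ⟨jw, rfl⟩ : ∃ t, jv = t + 3 := ⟨jv - 3, by omega⟩
  have hij' : iv % 3 ≠ (jw + 3) % 3 := hij
  have hA : Collinear ℝ ({x ⟨iv, hivlt⟩, x ⟨iv + 3, by omega⟩, p} : Set _) :=
    hline ⟨iv, by omega⟩
  have hB : Collinear ℝ ({x ⟨jw, by omega⟩, x ⟨jw + 3, hjvlt⟩, p} : Set _) :=
    hline ⟨jw, by omega⟩
  have H := key_lemma c p (x ⟨iv, hivlt⟩) (x ⟨iv + 3, by omega⟩)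
    (x ⟨jw, by omega⟩) (x ⟨jw + 3, hjvlt⟩) r
    (hsph _) (hsph _) (hsph _) (hsph _) hA hB
    (hnear _ hi') (hfar ⟨iv + 3, by omega⟩ (show 3 ≤ iv + 3 by omega))
    (hnear ⟨jw, by omega⟩ (show jw < 3 by omega)) (hfar _ hj')
  rcases H with h | h
  · exact ⟨⟨iv, hivlt⟩, ⟨jw, by omega⟩, Or.inl rfl,
      Or.inr (show jw % 3 = (jw + 3) % 3 by omega),
      Fin.ne_of_val_ne (show iv ≠ jw by omega), h⟩
  · exact ⟨⟨iv + 3, by omega⟩, ⟨jw + 3, hjvlt⟩,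
      Or.inl (show (iv + 3) % 3 = iv % 3 by omega), Or.inr rfl,
      Fin.ne_of_val_ne (show iv + 3 ≠ jw + 3 by omega), h⟩

/-- Six distinct points `x 0, ..., x 5` on a round 3-sphere in `ℝ⁴` (center `c`,
radius `r`), with the lines through the pairs `(x 0, x 3)`, `(x 1, x 4)`,
`(x 2, x 5)` all passing through a common point `p` strictly outside the sphere,
where `x 0, x 1, x 2` are on the near side of the tangency sphere `T_p`
(`⟪x - p, x - c⟫ < 0`) and `x 3, x 4, x 5` on the far side (`⟪x - p, x - c⟫ > 0`).
If `i` and `j` index points on different lines (different residues mod 3) and on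
different sides of `T_p`, then `(x i, x j)` is not a pair of minimal distance among
all pairs of points from the two lines containing them. -/
theorem stmt_15 (x : Fin 6 → EuclideanSpace ℝ (Fin 4)) (hdist : Function.Injective x)
    (c : EuclideanSpace ℝ (Fin 4)) (r : ℝ) (hr : 0 < r)
    (hsph : ∀ i, dist (x i) c = r)
    (p : EuclideanSpace ℝ (Fin 4)) (hp : r < dist p c)
    (hline : ∀ k : Fin 3,
      Collinear ℝ ({x ⟨k.val, by omega⟩, x ⟨k.val + 3, by omega⟩, p} : Set _))
    (hnear : ∀ k : Fin 6, k.val < 3 → (inner ℝ (x k - p) (x k - c) : ℝ) < 0)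
    (hfar : ∀ k : Fin 6, 3 ≤ k.val → 0 < (inner ℝ (x k - p) (x k - c) : ℝ))
    (i j : Fin 6) (hij : i.val % 3 ≠ j.val % 3)
    (hsides : (i.val < 3 ∧ 3 ≤ j.val) ∨ (j.val < 3 ∧ 3 ≤ i.val)) :
    ∃ u v : Fin 6, (u.val % 3 = i.val % 3 ∨ u.val % 3 = j.val % 3) ∧
      (v.val % 3 = i.val % 3 ∨ v.val % 3 = j.val % 3) ∧ u ≠ v ∧
      dist (x u) (x v) < dist (x i) (x j) := by
  rcases hsides with ⟨hi, hj⟩ | ⟨hj, hi⟩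
  · exact aux_main x c r hsph p hline hnear hfar i j hij hi hj
  · obtain ⟨u, v, h1, h2, h3, h4⟩ :=
      aux_main x c r hsph p hline hnear hfar j i (Ne.symm hij) hj hi
    exact ⟨u, v, h1.symm, h2.symm, h3, by rwa [dist_comm (x i)]⟩
end
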